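/- Let ξ > 0, K ≥ 0, and define F(S) = S·ψ(ξS) + (W − S)·ψ(ξ(W − S)/(K+1)) for S ∈ (0, W), where ψ(u) = u + φ(u)/Φ(u). Then S = W/(K+2) satisfies the first-order condition F'(S) = 0, and at this point F(W/(K+2)) = W·ψ(ξW/(K+2)). -/

import Mathlib

open MeasureTheory ProbabilityTheory Real

noncomputable def stdPDF (u : ℝ) : ℝ := (Real.sqrt (2 * Real.pi))⁻¹ * Real.exp (-u ^ 2 / 2)

noncomputable def stdCDF (u : ℝ) : ℝ := ∫ t in Set.Iic u, stdPDF t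

noncomputable def psi (u : ℝ) : ℝ := u + stdPDF u / stdCDF u

/-!
At `S₀ = W/(K+2)` we have `(W - S₀)/(K+1) = S₀`, so both terms of `F` evaluate `ψ` at the same
point `ξS₀`. The derivative is `ψ(ξS) + ξSψ'(ξS) - ψ(ξ(W-S)/(K+1)) - ξ(W-S)/(K+1)·ψ'(ξ(W-S)/(K+1))`,
whose two halves cancel there; this only needs `ψ` to be differentiable, which holds because
`Φ` is a positive antiderivative of the smooth `φ`.
-/

lemma stdPDF_pos (u : ℝ) : 0 < stdPDF u := by
  unfold stdPDF; positivity

lemma continuous_stdPDF : Continuous stdPDF := by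
  unfold stdPDF; fun_prop

lemma integrable_stdPDF : Integrable stdPDF := by
  have h : stdPDF = fun u => (Real.sqrt (2 * Real.pi))⁻¹ * Real.exp (-(1 / 2) * u ^ 2) := by
    funext u; unfold stdPDF; ring_nf
  rw [h]
  exact (integrable_exp_neg_mul_sq (by norm_num : (0 : ℝ) < 1 / 2)).const_mul _

lemma stdCDF_pos (u : ℝ) : 0 < stdCDF u := by
  unfold stdCDF
  rw [setIntegral_pos_iff_support_of_nonneg_ae
    (Filter.Eventually.of_forall fun x => (stdPDF_pos x).le) integrable_stdPDF.integrableOn]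
  have hsupp : Function.support stdPDF = Set.univ :=
    Set.eq_univ_of_forall fun x => (stdPDF_pos x).ne'
  simp [hsupp, Real.volume_Iic]

lemma hasDerivAt_stdCDF (u : ℝ) : HasDerivAt stdCDF (stdPDF u) u := by
  have h : stdCDF = fun x => stdCDF 0 + ∫ t in (0 : ℝ)..x, stdPDF t := by
    funext x
    rw [← intervalIntegral.integral_Iic_sub_Iic integrable_stdPDF.integrableOn
      integrable_stdPDF.integrableOn]
    unfold stdCDF; ring
  rw [h]
  exact (intervalIntegral.integral_hasDerivAt_right integrable_stdPDF.intervalIntegrable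
    continuous_stdPDF.aestronglyMeasurable.stronglyMeasurableAtFilter
    continuous_stdPDF.continuousAt).const_add _

lemma differentiable_psi : Differentiable ℝ psi := fun u => by
  have hpdf : DifferentiableAt ℝ stdPDF u := by unfold stdPDF; fun_prop
  exact differentiableAt_id.add
    (hpdf.div (hasDerivAt_stdCDF u).differentiableAt (stdCDF_pos u).ne')

/-- `F` of the statement, for a general `g` in place of `ψ` and `c` in place of `K + 1`. -/
noncomputable def splitObjective (g : ℝ → ℝ) (ξ c W S : ℝ) : ℝ :=
  S * g (ξ * S) + (W - S) * g (ξ * (W - S) / c)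

section splitObjective

variable {g : ℝ → ℝ} {ξ c W S₀ : ℝ}

lemma splitObjective_of_sub_eq_mul (hc : c ≠ 0) (hsplit : W - S₀ = c * S₀) :
    splitObjective g ξ c W S₀ = W * g (ξ * S₀) := by
  have harg : ξ * (W - S₀) / c = ξ * S₀ := by rw [hsplit]; field_simp
  rw [splitObjective, harg]
  ring

lemma hasDerivAt_splitObjective_zero (hg : DifferentiableAt ℝ g (ξ * S₀)) (hc : c ≠ 0)
    (hsplit : W - S₀ = c * S₀) :
    HasDerivAt (splitObjective g ξ c W) 0 S₀ := by
  have harg : ξ * (W - S₀) / c = ξ * S₀ := by rw [hsplit]; field_simp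
  have hg' := hg.hasDerivAt
  have hfirst : HasDerivAt (fun S => S * g (ξ * S))
      (1 * g (ξ * S₀) + S₀ * (deriv g (ξ * S₀) * (ξ * 1))) S₀ :=
    (hasDerivAt_id S₀).mul (hg'.comp S₀ ((hasDerivAt_id S₀).const_mul ξ))
  have hsub : HasDerivAt (fun S => W - S) (0 - 1) S₀ :=
    (hasDerivAt_const S₀ W).sub (hasDerivAt_id S₀)
  have hsecond : HasDerivAt (fun S => (W - S) * g (ξ * (W - S) / c))
      ((0 - 1) * g (ξ * S₀) + (W - S₀) * (deriv g (ξ * S₀) * (ξ * (0 - 1) / c))) S₀ := by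
    have hcomp := (harg ▸ hg').comp S₀ ((hsub.const_mul ξ).div_const c)
    have hprod := hsub.mul hcomp
    simp only [Function.comp_def] at hprod
    rwa [harg] at hprod
  refine (hfirst.add hsecond).congr_deriv ?_
  rw [hsplit]
  field_simp
  ring

end splitObjective

theorem optimal_trade_linear_rule_general (W ξ : ℝ) (K : ℕ) :
    HasDerivAt
        (fun S : ℝ => S * psi (ξ * S) + (W - S) * psi (ξ * (W - S) / ((K : ℝ) + 1))) 0
        (W / ((K : ℝ) + 2)) ∧
      (W / ((K : ℝ) + 2)) * psi (ξ * (W / ((K : ℝ) + 2))) +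
          (W - W / ((K : ℝ) + 2)) * psi (ξ * (W - W / ((K : ℝ) + 2)) / ((K : ℝ) + 1)) =
        W * psi (ξ * W / ((K : ℝ) + 2)) := by
  have hc : (K : ℝ) + 1 ≠ 0 := by positivity
  have hsplit : W - W / ((K : ℝ) + 2) = ((K : ℝ) + 1) * (W / ((K : ℝ) + 2)) := by
    field_simp; ring
  refine ⟨hasDerivAt_splitObjective_zero (differentiable_psi _) hc hsplit, ?_⟩
  rw [mul_div_assoc ξ W]
  exact splitObjective_of_sub_eq_mul hc hsplit

/-- `S = W/(K+2)` satisfies the first-order condition for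
`F(S) = S·ψ(ξS) + (W - S)·ψ(ξ(W - S)/(K + 1))`, and there `F = W·ψ(ξW/(K+2))`. -/
theorem optimal_trade_linear_rule (W ξ : ℝ) (hW : 0 < W) (hξ : 0 < ξ) (K : ℕ) :
    HasDerivAt
        (fun S : ℝ => S * psi (ξ * S) + (W - S) * psi (ξ * (W - S) / ((K : ℝ) + 1))) 0
        (W / ((K : ℝ) + 2)) ∧
      (W / ((K : ℝ) + 2)) * psi (ξ * (W / ((K : ℝ) + 2))) +
          (W - W / ((K : ℝ) + 2)) * psi (ξ * (W - W / ((K : ℝ) + 2)) / ((K : ℝ) + 1)) =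
        W * psi (ξ * W / ((K : ℝ) + 2)) :=
  optimal_trade_linear_rule_general W ξ K
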